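/- arXiv:1010.4212 — 2 statements merged into one kernel-verified Lean document; each statement's English description precedes it below -/
import Mathlib

section
/- Let M be a countable Urysohn metric space with finite distance set D, H = (H,d) a subspace of M with H ⊆ M. Then H is isometric to M if and only if for every Katětov function t of M with dom(t) ⊆ H, the orbit orb(t) intersects H. -/
namespace Sauer

def IsMetricTriple (a b c : ℝ) : Prop := a ≤ b + c ∧ b ≤ a + c ∧ c ≤ a + b

def IsUniversalDist (D : Set ℝ) : Prop :=
  D.Finite ∧ (0 : ℝ) ∈ D ∧ (∀ d ∈ D, 0 ≤ d) ∧
    ∀ s x₀ y₀ x₁ y₁ : ℝ, s ∈ D → x₀ ∈ D → y₀ ∈ D → x₁ ∈ D → y₁ ∈ D →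
      0 < x₀ → 0 < y₀ → 0 < x₁ → 0 < y₁ →
      IsMetricTriple x₀ y₀ s → IsMetricTriple x₁ y₁ s →
      ∃ t ∈ D, 0 < t ∧ IsMetricTriple x₀ x₁ t ∧ IsMetricTriple y₀ y₁ t

open Classical in
noncomputable def dsucc (D : Set ℝ) (r : ℝ) : ℝ :=
  if ({s | s ∈ D ∧ r < s}).Nonempty then sInf {s | s ∈ D ∧ r < s} else r

noncomputable def dpred (D : Set ℝ) (r : ℝ) : ℝ := sSup {s | s ∈ D ∧ s < r}

def IsBlock (D B : Set ℝ) : Prop :=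
  ∃ (n : ℕ) (b : ℕ → ℝ),
    B = {x | ∃ i, i ≤ n ∧ x = b i} ∧
    (∀ i ≤ n, b i ∈ D) ∧ 0 < b 0 ∧
    (∀ i < n, b i < b (i + 1)) ∧
    (∀ y ∈ D, y < b 0 → 2 * y < b 0) ∧
    (∀ i < n, b (i + 1) = dsucc D (b i)) ∧
    (∀ i < n, b (i + 1) ≤ b i + b 0)

def IsJump (D : Set ℝ) (r : ℝ) : Prop := r ∈ D ∧ ∀ s ∈ D, r < s → 2 * r < s

structure Katetov (D : Set ℝ) (M : Type) [MetricSpace M] where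
  dom : Finset M
  f : M → ℝ
  mem : ∀ x ∈ dom, f x ∈ D
  pos : ∀ x ∈ dom, 0 < f x
  ineq1 : ∀ x ∈ dom, ∀ y ∈ dom, |f x - f y| ≤ dist x y
  ineq2 : ∀ x ∈ dom, ∀ y ∈ dom, dist x y ≤ f x + f y

variable {D : Set ℝ} {M : Type} [MetricSpace M]

def orb (t : Katetov D M) : Set M :=
  {y | y ∉ t.dom ∧ ∀ x ∈ t.dom, dist y x = t.f x}

noncomputable def rank (t : Katetov D M) : ℝ := sInf (t.f '' ↑t.dom)

def orbDistSet (s t : Katetov D M) : Set ℝ :=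
  {m | ∃ x ∈ orb s, ∃ y ∈ orb t, dist x y = m}

noncomputable def dminK (s t : Katetov D M) : ℝ := sInf (orbDistSet s t)

noncomputable def dmin (A B : Set M) : ℝ := sInf {d | ∃ x ∈ A, ∃ y ∈ B, dist x y = d}

def IsHomogeneous (M : Type) [MetricSpace M] : Prop :=
  ∀ (A : Finset M) (f : M → M),
    (∀ x ∈ A, ∀ y ∈ A, dist (f x) (f y) = dist x y) →
    ∃ g : M ≃ᵢ M, ∀ x ∈ A, g x = f x

def IsUrysohn (D : Set ℝ) (M : Type) [MetricSpace M] : Prop :=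
  Countable M ∧ (∀ x y : M, dist x y ∈ D) ∧ IsHomogeneous M ∧
    ∀ (N : Type) [MetricSpace N], Finite N → (∀ x y : N, dist x y ∈ D) →
      ∃ f : N → M, Isometry f

/-!
Pulling a Katětov function `t` back along an isometry `f : M → M` with range `H` gives a
Katětov function on `M`; by universality and homogeneity of `M` it is realized by some point
`y`, and then `f y` realizes `t` inside `H`.

Conversely, the orbit condition says that every finite partial isometry from `M` into `H` extends
to any further point of `M`; since every Katětov function is realized in `M`, every finite partial
isometry from `H` into `M` extends to any further point of `H`. A back-and-forth along
enumerations of the countable spaces `M` and `H` then produces a surjective isometry `M → H`.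
-/

section BackAndForth

variable {X Y : Type*} [MetricSpace X] [MetricSpace Y]

/-- The graph of a partial isometry `x ↦ y`; being functional follows from the condition. -/
def IsDistPreserving (s : Set (X × Y)) : Prop :=
  ∀ a ∈ s, ∀ b ∈ s, dist a.2 b.2 = dist a.1 b.1

variable (X Y) in
def HasForthProperty : Prop :=
  ∀ s : Finset (X × Y), IsDistPreserving (s : Set (X × Y)) →
    ∀ x : X, ∃ y : Y, ∀ a ∈ s, dist y a.2 = dist x a.1

lemma IsDistPreserving.insert_of_dist_eq {s : Set (X × Y)} (hs : IsDistPreserving s)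
    {x : X} {y : Y} (hxy : ∀ a ∈ s, dist y a.2 = dist x a.1) :
    IsDistPreserving (insert (x, y) s) := by
  rintro a (rfl | ha) b (rfl | hb)
  · simp
  · exact hxy b hb
  · rw [dist_comm, hxy a ha, dist_comm]
  · exact hs a ha b hb

lemma isDistPreserving_iUnion {S : ℕ → Set (X × Y)} (hmono : Monotone S)
    (hS : ∀ n, IsDistPreserving (S n)) : IsDistPreserving (⋃ n, S n) := by
  simp only [IsDistPreserving, Set.mem_iUnion]
  rintro a ⟨m, ha⟩ b ⟨n, hb⟩
  exact hS (max m n) a (hmono (le_max_left m n) ha) b (hmono (le_max_right m n) hb)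

lemma HasForthProperty.back (h : HasForthProperty Y X) {s : Finset (X × Y)}
    (hs : IsDistPreserving (s : Set (X × Y))) (y : Y) :
    ∃ x : X, ∀ a ∈ s, dist x a.1 = dist y a.2 := by
  classical
  obtain ⟨x, hx⟩ := h (s.image Prod.swap) (by
    simp only [IsDistPreserving, Finset.coe_image, Set.forall_mem_image]
    exact fun a ha b hb => (hs a ha b hb).symm) y
  exact ⟨x, fun a ha => hx a.swap (Finset.mem_image_of_mem _ ha)⟩

lemma IsDistPreserving.exists_extend (hXY : HasForthProperty X Y) (hYX : HasForthProperty Y X)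
    {s : Finset (X × Y)} (hs : IsDistPreserving (s : Set (X × Y))) (x : X) (y : Y) :
    ∃ s' : Finset (X × Y), s ⊆ s' ∧ IsDistPreserving (s' : Set (X × Y)) ∧
      (∃ y', (x, y') ∈ s') ∧ ∃ x', (x', y) ∈ s' := by
  classical
  obtain ⟨y', hy'⟩ := hXY s hs x
  have hs₁ : IsDistPreserving ((insert (x, y') s : Finset (X × Y)) : Set (X × Y)) := by
    rw [Finset.coe_insert]; exact hs.insert_of_dist_eq hy'
  obtain ⟨x', hx'⟩ := hYX.back hs₁ y
  refine ⟨insert (x', y) (insert (x, y') s), ?_, ?_, ⟨y', by simp⟩, ⟨x', by simp⟩⟩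
  · exact (Finset.subset_insert _ _).trans (Finset.subset_insert _ _)
  · rw [Finset.coe_insert]
    exact hs₁.insert_of_dist_eq fun a ha => (hx' a ha).symm

lemma IsDistPreserving.exists_isometry_surjective {R : Set (X × Y)} (hR : IsDistPreserving R)
    (hdom : ∀ x, ∃ y, (x, y) ∈ R) (hran : ∀ y, ∃ x, (x, y) ∈ R) :
    ∃ f : X → Y, Isometry f ∧ Function.Surjective f := by
  choose f hf using hdom
  refine ⟨f, Isometry.of_dist_eq fun x x' => hR _ (hf x) _ (hf x'), fun y => ?_⟩
  obtain ⟨x, hx⟩ := hran y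
  exact ⟨x, dist_eq_zero.1 (by rw [hR _ (hf x) _ hx, dist_self])⟩

theorem exists_isometry_surjective_of_hasForthProperty [Countable X] [Countable Y]
    (hXY : HasForthProperty X Y) (hYX : HasForthProperty Y X) :
    ∃ f : X → Y, Isometry f ∧ Function.Surjective f := by
  rcases isEmpty_or_nonempty X with hX | hX
  · refine ⟨isEmptyElim, Isometry.of_dist_eq isEmptyElim, fun y => ?_⟩
    exact isEmptyElim (hYX ∅ (by simp [IsDistPreserving]) y).choose
  have : Nonempty Y := ⟨(hXY ∅ (by simp [IsDistPreserving]) hX.some).choose⟩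
  obtain ⟨eX, heX⟩ := exists_surjective_nat X
  obtain ⟨eY, heY⟩ := exists_surjective_nat Y
  -- with the hypothesis inside the `∃`, `choose` yields a step function on all finsets
  have round (s : Finset (X × Y)) (n : ℕ) : ∃ s' : Finset (X × Y),
      IsDistPreserving (s : Set (X × Y)) → s ⊆ s' ∧ IsDistPreserving (s' : Set (X × Y)) ∧
        (∃ y, (eX n, y) ∈ s') ∧ ∃ x, (x, eY n) ∈ s' := by
    by_cases hs : IsDistPreserving (s : Set (X × Y))
    · obtain ⟨s', hs'⟩ := hs.exists_extend hXY hYX (eX n) (eY n)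
      exact ⟨s', fun _ => hs'⟩
    · exact ⟨s, fun h => absurd h hs⟩
  choose next hnext using round
  obtain ⟨S, hS₀, hS_succ⟩ : ∃ S : ℕ → Finset (X × Y), S 0 = ∅ ∧ ∀ n, S (n + 1) = next (S n) n :=
    ⟨fun n => n.rec ∅ fun n s => next s n, rfl, fun _ => rfl⟩
  have hS : ∀ n, IsDistPreserving (S n : Set (X × Y)) := by
    intro n
    induction n with
    | zero => simp [hS₀, IsDistPreserving]
    | succ n ih => rw [hS_succ]; exact (hnext (S n) n ih).2.1
  have hmono : Monotone fun n => (S n : Set (X × Y)) :=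
    monotone_nat_of_le_succ fun n => by
      rw [hS_succ]; exact Finset.coe_subset.2 (hnext (S n) n (hS n)).1
  refine (isDistPreserving_iUnion hmono hS).exists_isometry_surjective (fun x => ?_) (fun y => ?_)
  · obtain ⟨n, rfl⟩ := heX x
    obtain ⟨y, hy⟩ := (hnext (S n) n (hS n)).2.2.1
    exact ⟨y, Set.mem_iUnion.2 ⟨n + 1, by rw [hS_succ]; exact hy⟩⟩
  · obtain ⟨n, rfl⟩ := heY y
    obtain ⟨x, hx⟩ := (hnext (S n) n (hS n)).2.2.2
    exact ⟨x, Set.mem_iUnion.2 ⟨n + 1, by rw [hS_succ]; exact hx⟩⟩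

end BackAndForth

lemma mem_orb_iff {t : Katetov D M} {y : M} : y ∈ orb t ↔ ∀ x ∈ t.dom, dist y x = t.f x := by
  refine ⟨And.right, fun h => ⟨fun hy => ?_, h⟩⟩
  exact (t.pos y hy).ne (by rw [← h y hy, dist_self])

namespace Katetov

/-- Distances of the one-point extension of `t.dom` defined by `t`, the new point being `none`. -/
noncomputable def extDist (t : Katetov D M) : Option t.dom → Option t.dom → ℝ
  | some x, some y => dist (x : M) y
  | some x, none => t.f x
  | none, some y => t.f y
  | none, none => 0

noncomputable abbrev extMetricSpace (t : Katetov D M) : MetricSpace (Option t.dom) where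
  dist := t.extDist
  dist_self a := by cases a <;> simp [extDist]
  dist_comm a b := by cases a <;> cases b <;> simp [extDist, dist_comm]
  dist_triangle a b c := by
    have le_add (x : t.dom) (y : t.dom) : t.f x ≤ dist (x : M) y + t.f y := by
      linarith [(abs_le.mp (t.ineq1 x x.2 y y.2)).2]
    rcases a with _ | x <;> rcases b with _ | y <;> rcases c with _ | z <;> simp only [extDist]
    · simp
    · simp
    · linarith [t.pos y y.2]
    · linarith [le_add z y, dist_comm (y : M) z]
    · simp
    · exact t.ineq2 x x.2 z z.2
    · exact le_add x y
    · exact dist_triangle (x : M) y z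
  eq_of_dist_eq_zero {a b} h := by
    rcases a with _ | x <;> rcases b with _ | y
    · rfl
    · exact absurd h (t.pos y y.2).ne'
    · exact absurd h (t.pos x x.2).ne'
    · exact congrArg some (Subtype.ext (dist_eq_zero.1 h))

theorem orb_nonempty (h0 : (0 : ℝ) ∈ D) (hM : IsUrysohn D M) (t : Katetov D M) :
    (orb t).Nonempty := by
  classical
  let := t.extMetricSpace
  obtain ⟨g, hg⟩ := hM.2.2.2 (Option t.dom) inferInstance (by
    rintro (_ | x) (_ | y)
    exacts [h0, t.mem y y.2, t.mem x x.2, hM.2.1 x y])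
  -- homogeneity moves the copy `g ∘ some` of `t.dom` back onto `t.dom`
  obtain ⟨ψ, hψ⟩ := hM.2.2.1 t.dom (fun x => if hx : x ∈ t.dom then g (some ⟨x, hx⟩) else x) (by
    intro x hx y hy
    simp only [dif_pos hx, dif_pos hy, hg.dist_eq]
    rfl)
  refine ⟨ψ.symm (g none), mem_orb_iff.2 fun x hx => ?_⟩
  calc dist (ψ.symm (g none)) x = dist (g none) (ψ x) := by
        rw [← ψ.dist_eq, ψ.apply_symm_apply]
    _ = dist (g none) (g (some ⟨x, hx⟩)) := by rw [hψ x hx, dif_pos hx]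
    _ = t.f x := hg.dist_eq _ _

noncomputable def comap {N : Type} [MetricSpace N] (t : Katetov D M) {φ : N → M}
    (hφ : Isometry φ) : Katetov D N where
  dom := t.dom.preimage φ hφ.injective.injOn
  f := t.f ∘ φ
  mem _ hx := t.mem _ (Finset.mem_preimage.1 hx)
  pos _ hx := t.pos _ (Finset.mem_preimage.1 hx)
  ineq1 x hx y hy :=
    hφ.dist_eq x y ▸ t.ineq1 _ (Finset.mem_preimage.1 hx) _ (Finset.mem_preimage.1 hy)
  ineq2 x hx y hy :=
    hφ.dist_eq x y ▸ t.ineq2 _ (Finset.mem_preimage.1 hx) _ (Finset.mem_preimage.1 hy)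

lemma map_mem_orb_comap {N : Type} [MetricSpace N] {t : Katetov D M} {φ : N → M}
    (hφ : Isometry φ) (hdom : ↑t.dom ⊆ Set.range φ) {y : N} (hy : y ∈ orb (t.comap hφ)) :
    φ y ∈ orb t := by
  refine mem_orb_iff.2 fun x hx => ?_
  obtain ⟨x, rfl⟩ := hdom hx
  rw [hφ.dist_eq]
  exact hy.2 x (by simpa [comap] using hx)

lemma exists_of_partialIsometry (hDM : ∀ x y : M, dist x y ∈ D) {ι : Type*} (s : Finset ι)
    {p q : ι → M} (hpq : ∀ i ∈ s, ∀ j ∈ s, dist (q i) (q j) = dist (p i) (p j)) {m : M}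
    (hm : ∀ i ∈ s, p i ≠ m) :
    ∃ t : Katetov D M, (t.dom : Set M) = q '' s ∧ ∀ i ∈ s, t.f (q i) = dist m (p i) := by
  classical
  have hfac : Function.FactorsThrough (fun i : s => dist m (p i)) (fun i : s => q i) := by
    intro i j hij
    have : p i = p j := dist_eq_zero.1 ((hpq i i.2 j j.2).symm.trans (dist_eq_zero.2 hij))
    simp only [this]
  set F := Function.extend (fun i : s => q i) (fun i : s => dist m (p i)) 0
  have hF : ∀ i ∈ s, F (q i) = dist m (p i) := fun i hi => hfac.extend_apply 0 ⟨i, hi⟩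
  refine ⟨⟨s.image q, F, ?_, ?_, ?_, ?_⟩, by simp, hF⟩ <;> simp only [Finset.forall_mem_image]
  · exact fun i hi => hF i hi ▸ hDM m (p i)
  · exact fun i hi => hF i hi ▸ dist_pos.2 (hm i hi).symm
  · intro i hi j hj
    rw [hF i hi, hF j hj, hpq i hi j hj, dist_comm m, dist_comm m]
    exact abs_dist_sub_le (p i) (p j) m
  · intro i hi j hj
    rw [hF i hi, hF j hj, hpq i hi j hj, dist_comm m]
    exact dist_triangle (p i) m (p j)

end Katetov

theorem orb_inter_range_nonempty (h0 : (0 : ℝ) ∈ D) (hM : IsUrysohn D M) {φ : M → M}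
    (hφ : Isometry φ) (t : Katetov D M) (hdom : ↑t.dom ⊆ Set.range φ) :
    (orb t ∩ Set.range φ).Nonempty := by
  obtain ⟨y, hy⟩ := Katetov.orb_nonempty h0 hM (t.comap hφ)
  exact ⟨φ y, Katetov.map_mem_orb_comap hφ hdom hy, y, rfl⟩

lemma exists_mem_forall_dist_eq (hDM : ∀ x y : M, dist x y ∈ D) {H : Set M}
    (hH : ∀ t : Katetov D M, ↑t.dom ⊆ H → (orb t ∩ H).Nonempty) {ι : Type*} (s : Finset ι)
    {p q : ι → M} (hpq : ∀ i ∈ s, ∀ j ∈ s, dist (q i) (q j) = dist (p i) (p j))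
    (hqH : ∀ i ∈ s, q i ∈ H) (m : M) : ∃ y ∈ H, ∀ i ∈ s, dist y (q i) = dist m (p i) := by
  by_cases hm : ∃ i ∈ s, p i = m
  · obtain ⟨i, hi, rfl⟩ := hm
    exact ⟨q i, hqH i hi, fun j hj => hpq i hi j hj⟩
  push Not at hm
  obtain ⟨t, hdom, htf⟩ := Katetov.exists_of_partialIsometry hDM s hpq hm
  obtain ⟨y, hy, hyH⟩ := hH t (hdom ▸ Set.image_subset_iff.2 hqH)
  have hq : ∀ i ∈ s, q i ∈ t.dom := fun i hi =>
    Finset.mem_coe.1 (hdom ▸ Set.mem_image_of_mem q hi)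
  exact ⟨y, hyH, fun i hi => by rw [hy.2 _ (hq i hi), htf i hi]⟩

lemma hasForthProperty_subtype (hDM : ∀ x y : M, dist x y ∈ D) {H : Set M}
    (hH : ∀ t : Katetov D M, ↑t.dom ⊆ H → (orb t ∩ H).Nonempty) : HasForthProperty M H :=
  fun s hs x =>
    have ⟨y, hyH, hy⟩ := exists_mem_forall_dist_eq hDM hH s (p := Prod.fst)
      (q := fun a => (a.2 : M)) hs (fun a _ => a.2.2) x
    ⟨⟨y, hyH⟩, hy⟩

lemma hasForthProperty_of_isUrysohn (h0 : (0 : ℝ) ∈ D) (hM : IsUrysohn D M) (H : Set M) :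
    HasForthProperty H M :=
  fun s hs x =>
    have ⟨y, _, hy⟩ := exists_mem_forall_dist_eq hM.2.1 (H := Set.univ)
      (fun t _ => by simpa using Katetov.orb_nonempty h0 hM t) s (p := fun a => (a.1 : M))
      (q := Prod.snd) hs (fun _ _ => trivial) x
    ⟨y, hy⟩

theorem statement5 (D : Set ℝ) (hD : IsUniversalDist D) (M : Type) [MetricSpace M]
    (hM : IsUrysohn D M) (H : Set M) :
    (∃ f : M → M, Isometry f ∧ Set.range f = H) ↔
      ∀ t : Katetov D M, ↑t.dom ⊆ H → (orb t ∩ H).Nonempty := by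
  constructor
  · rintro ⟨f, hf, rfl⟩ t hdom
    exact orb_inter_range_nonempty hD.2.1 hM hf t hdom
  · intro hH
    have := hM.1
    obtain ⟨f, hf, hsurj⟩ := exists_isometry_surjective_of_hasForthProperty
      (hasForthProperty_subtype hM.2.1 hH) (hasForthProperty_of_isUrysohn hD.2.1 hM H)
    exact ⟨(↑) ∘ f, isometry_subtype_coe.comp hf, by rw [hsurj.range_comp, Subtype.range_coe]⟩

end Sauer
end

section
/- Let r be a jump number of D and M the countable Urysohn space with distance set D. For any finitely many pairwise distinct ~-equivalence classes A₀, …, A_{n−1} (where x ~ y iff d(x,y) ≤ r), there exist points a_i ∈ A_i such that d(a_i, a_j) = d_min(A_i, A_j) for all i, j. -/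
/-!
Since `r` is a jump, `dist x y ≤ r` is an equivalence relation whose classes are the closed
`r`-balls, and distinct classes are more than `2r` apart. From every point of a class the
minimal distance to another class is attained: take a pair `p, q` realizing it; then `x` is
within `dmin + r` of `q`, so the Urysohn space has a point at distance `dmin` from `x` and `r`
from `q`. Hence `dmin` satisfies the triangle inequality between classes, and the representatives
can be chosen one class at a time, each new one realizing a Katětov function over the previous
ones and the centre of its class. Classes of a jump `r = 0` are singletons.
-/


namespace Sauer

variable {D : Set ℝ} {M : Type} [MetricSpace M]

open Metric

theorem IsUrysohn.dist_mem (hM : IsUrysohn D M) (x y : M) : dist x y ∈ D := hM.2.1 x y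

section Realization

variable {ι : Type}

noncomputable def optionDist (p : ι → M) (φ : ι → ℝ) : Option ι → Option ι → ℝ
  | none, none => 0
  | none, some i => φ i
  | some i, none => φ i
  | some i, some j => dist (p i) (p j)

@[reducible]
noncomputable def katetovExtension (p : ι → M) (φ : ι → ℝ) (hp : Function.Injective p)
    (hpos : ∀ i, 0 < φ i) (hlip : ∀ i j, |φ i - φ j| ≤ dist (p i) (p j))
    (htri : ∀ i j, dist (p i) (p j) ≤ φ i + φ j) : MetricSpace (Option ι) where
  dist := optionDist p φ
  dist_self x := by cases x <;> simp [optionDist]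
  dist_comm x y := by cases x <;> cases y <;> simp [optionDist, dist_comm]
  dist_triangle x y z := by
    have hsub : ∀ i j, φ i - φ j ≤ dist (p i) (p j) := fun i j => (abs_le.mp (hlip i j)).2
    rcases x with _ | i <;> rcases y with _ | j <;> rcases z with _ | k <;>
      simp only [optionDist]
    · norm_num
    · simp
    · linarith [hpos j]
    · linarith [hsub k j, dist_comm (p j) (p k)]
    · simp
    · exact htri i k
    · linarith [hsub i j]
    · exact dist_triangle _ _ _
  eq_of_dist_eq_zero {x y} h := by
    rcases x with _ | i <;> rcases y with _ | j <;> simp only [optionDist] at h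
    · rfl
    · exact absurd h (hpos j).ne'
    · exact absurd h (hpos i).ne'
    · exact congrArg some (hp (dist_eq_zero.mp h))

/-- Embed the one-point extension into `M`, then move it back onto `p` by homogeneity. -/
theorem IsUrysohn.exists_dist_eq (hM : IsUrysohn D M) (h0 : (0 : ℝ) ∈ D) [Finite ι]
    (p : ι → M) (φ : ι → ℝ) (hp : Function.Injective p) (hmem : ∀ i, φ i ∈ D)
    (hpos : ∀ i, 0 < φ i) (hlip : ∀ i j, |φ i - φ j| ≤ dist (p i) (p j))
    (htri : ∀ i j, dist (p i) (p j) ≤ φ i + φ j) :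
    ∃ z : M, ∀ i, dist z (p i) = φ i := by
  classical
  have := Fintype.ofFinite ι
  let := katetovExtension p φ hp hpos hlip htri
  obtain ⟨-, hdist, hhom, hext⟩ := hM
  obtain ⟨f, hf⟩ := hext (Option ι) inferInstance (by
    rintro (_ | i) (_ | j)
    exacts [h0, hmem j, hmem i, hdist _ _])
  have hfs : Function.Injective (f ∘ some) := hf.injective.comp (Option.some_injective ι)
  obtain ⟨g, hg⟩ := hhom (Finset.univ.image (f ∘ some)) (Function.extend (f ∘ some) p id) (by
    simp only [Finset.mem_image, Finset.mem_univ, true_and]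
    rintro _ ⟨i, rfl⟩ _ ⟨j, rfl⟩
    rw [hfs.extend_apply, hfs.extend_apply, Function.comp_apply, Function.comp_apply,
      hf.dist_eq]
    rfl)
  refine ⟨g (f none), fun i => ?_⟩
  rw [← hfs.extend_apply p id i, ← hg _ (Finset.mem_image_of_mem _ (Finset.mem_univ i)),
    g.dist_eq, Function.comp_apply, hf.dist_eq]
  rfl

theorem IsUrysohn.exists_dist_eq_dist_eq (hM : IsUrysohn D M) {x y : M} (hxy : x ≠ y)
    {α β : ℝ} (hα : α ∈ D) (hβ : β ∈ D) (hα0 : 0 < α) (hβ0 : 0 < β)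
    (hlip : |α - β| ≤ dist x y) (htri : dist x y ≤ α + β) :
    ∃ z : M, dist z x = α ∧ dist z y = β := by
  obtain ⟨z, hz⟩ := hM.exists_dist_eq (dist_self x ▸ hM.dist_mem x x) (fun b => cond b x y)
    (fun b => cond b α β) (by intro b c; cases b <;> cases c <;> simp [hxy, hxy.symm])
    (Bool.forall_bool.2 ⟨hβ, hα⟩) (Bool.forall_bool.2 ⟨hβ0, hα0⟩)
    (by simp [Bool.forall_bool, abs_sub_comm, dist_comm, hlip])
    (by simp [Bool.forall_bool, add_comm, dist_comm, htri, hα0.le, hβ0.le])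
  exact ⟨z, hz true, hz false⟩

end Realization

section Dmin

variable {A B : Set M}

theorem dmin_le_dist {x y : M} (hx : x ∈ A) (hy : y ∈ B) : dmin A B ≤ dist x y :=
  csInf_le ⟨0, by rintro _ ⟨x, -, y, -, rfl⟩; exact dist_nonneg⟩ ⟨x, hx, y, hy, rfl⟩

theorem dmin_comm (A B : Set M) : dmin A B = dmin B A := by
  unfold dmin
  congr 1
  ext d
  constructor <;> rintro ⟨x, hx, y, hy, rfl⟩ <;> exact ⟨y, hy, x, hx, dist_comm _ _⟩

theorem dmin_self (hA : A.Nonempty) : dmin A A = 0 := by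
  obtain ⟨x, hx⟩ := hA
  refine le_antisymm (by simpa using dmin_le_dist hx hx) (Real.sInf_nonneg ?_)
  rintro _ ⟨x, -, y, -, rfl⟩
  exact dist_nonneg

theorem dmin_singleton (x y : M) : dmin {x} {y} = dist x y := by
  simp [dmin]

theorem exists_dist_eq_dmin (hfin : D.Finite) (hdist : ∀ x y : M, dist x y ∈ D)
    (hA : A.Nonempty) (hB : B.Nonempty) : ∃ x ∈ A, ∃ y ∈ B, dist x y = dmin A B := by
  obtain ⟨x, hx⟩ := hA
  obtain ⟨y, hy⟩ := hB
  exact Set.Nonempty.csInf_mem (s := {d | ∃ x ∈ A, ∃ y ∈ B, dist x y = d})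
    ⟨_, x, hx, y, hy, rfl⟩
    (hfin.subset (by rintro _ ⟨x, -, y, -, rfl⟩; exact hdist x y))

theorem dmin_mem (hfin : D.Finite) (hdist : ∀ x y : M, dist x y ∈ D) (hA : A.Nonempty)
    (hB : B.Nonempty) : dmin A B ∈ D := by
  obtain ⟨x, -, y, -, hxy⟩ := exists_dist_eq_dmin hfin hdist hA hB
  exact hxy ▸ hdist x y

end Dmin

section Jump

variable {r : ℝ}

/-- `dist x z ≤ 2r` forces `dist x z ≤ r`, since no distance lies in `(r, 2r]`. -/
theorem IsJump.dist_le_trans (hr : IsJump D r) (hdist : ∀ x y : M, dist x y ∈ D) {x y z : M}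
    (hxy : dist x y ≤ r) (hyz : dist y z ≤ r) : dist x z ≤ r := by
  by_contra! h
  linarith [hr.2 _ (hdist x z) h, dist_triangle x y z]

theorem IsJump.dist_le_of_mem_closedBall (hr : IsJump D r) (hdist : ∀ x y : M, dist x y ∈ D)
    {a x y : M} (hx : x ∈ closedBall a r) (hy : y ∈ closedBall a r) : dist x y ≤ r :=
  hr.dist_le_trans hdist hx (by rwa [dist_comm])

theorem IsJump.two_mul_lt_dist (hr : IsJump D r) (hdist : ∀ x y : M, dist x y ∈ D)
    {a b x y : M} (hab : r < dist a b) (hx : x ∈ closedBall a r) (hy : y ∈ closedBall b r) :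
    2 * r < dist x y := by
  refine hr.2 _ (hdist x y) (lt_of_not_ge fun hxy => hab.not_ge ?_)
  exact hr.dist_le_trans hdist (hr.dist_le_trans hdist (by rwa [dist_comm]) hxy) hy

theorem IsJump.two_mul_lt_dmin (hr : IsJump D r) (hfin : D.Finite)
    (hdist : ∀ x y : M, dist x y ∈ D) (hr0 : 0 ≤ r) {a b : M} (hab : r < dist a b) :
    2 * r < dmin (closedBall a r) (closedBall b r) := by
  obtain ⟨x, hx, y, hy, hxy⟩ :=
    exists_dist_eq_dmin hfin hdist (nonempty_closedBall.2 hr0) (nonempty_closedBall.2 hr0)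
  exact hxy ▸ hr.two_mul_lt_dist hdist hab hx hy

end Jump

section Classes

variable {r : ℝ}

theorem exists_mem_closedBall_dist_eq_dmin (hfin : D.Finite) (hM : IsUrysohn D M)
    (hr : IsJump D r) (hr0 : 0 < r) {a b x : M} (hab : r < dist a b)
    (hx : x ∈ closedBall a r) :
    ∃ t ∈ closedBall b r, dist x t = dmin (closedBall a r) (closedBall b r) := by
  set m := dmin (closedBall a r) (closedBall b r)
  obtain ⟨p, hp, q, hq, hpq⟩ := exists_dist_eq_dmin hfin hM.dist_mem
    (nonempty_closedBall.2 hr0.le) (nonempty_closedBall.2 hr0.le)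
  have hm : 2 * r < m := hr.two_mul_lt_dmin hfin hM.dist_mem hr0.le hab
  have hxq_ge : m ≤ dist x q := dmin_le_dist hx hq
  have hxq_le : dist x q ≤ m + r := by
    linarith [dist_triangle x p q, hr.dist_le_of_mem_closedBall hM.dist_mem hx hp]
  have hxq : x ≠ q := by
    rintro rfl
    rw [dist_self] at hxq_ge
    linarith
  -- a point at distance `m` from `x` and `r` from `q` lies in the class of `b`
  obtain ⟨z, hzx, hzq⟩ := hM.exists_dist_eq_dist_eq hxq (hpq ▸ hM.dist_mem p q) hr.1
    (by linarith) hr0 (abs_le.2 ⟨by linarith, by linarith⟩) (by linarith)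
  exact ⟨z, hr.dist_le_trans hM.dist_mem hzq.le hq, by rw [dist_comm, hzx]⟩

theorem dmin_closedBall_le_add (hfin : D.Finite) (hM : IsUrysohn D M) (hr : IsJump D r)
    (hr0 : 0 < r) {a b c : M} (hbc : r < dist b c) :
    dmin (closedBall a r) (closedBall c r) ≤
      dmin (closedBall a r) (closedBall b r) + dmin (closedBall b r) (closedBall c r) := by
  obtain ⟨p, hp, t, ht, hpt⟩ := exists_dist_eq_dmin hfin hM.dist_mem
    (nonempty_closedBall.2 hr0.le) (nonempty_closedBall.2 hr0.le)
  obtain ⟨s, hs, hts⟩ := exists_mem_closedBall_dist_eq_dmin hfin hM hr hr0 hbc ht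
  calc dmin (closedBall a r) (closedBall c r) ≤ dist p s := dmin_le_dist hp hs
    _ ≤ dist p t + dist t s := dist_triangle p t s
    _ = _ := by rw [hpt, hts]

theorem dist_le_dmin_closedBall_add (hfin : D.Finite) (hM : IsUrysohn D M) (hr : IsJump D r)
    (hr0 : 0 < r) {a b x y : M} (hab : r < dist a b) (hx : x ∈ closedBall a r)
    (hy : y ∈ closedBall b r) : dist x y ≤ dmin (closedBall a r) (closedBall b r) + r := by
  obtain ⟨t, ht, hxt⟩ := exists_mem_closedBall_dist_eq_dmin hfin hM hr hr0 hab hx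
  linarith [dist_triangle x t y, hr.dist_le_of_mem_closedBall hM.dist_mem ht hy]

/-- The minimal distances from the classes of the `a i` to that of `c`, together with `r` at `c`,
form a Katětov function on the points `w i` and `c`: its Lipschitz condition is the triangle inequality for
`dmin`. Any realization of it is a representative of the new class. -/
theorem exists_mem_closedBall_dist_eq_dmin_of_transversal (hfin : D.Finite)
    (hM : IsUrysohn D M) (hr : IsJump D r) (hr0 : 0 < r) {κ : Type} [Finite κ] {a w : κ → M}
    {c : M} (ha : ∀ i j, i ≠ j → r < dist (a i) (a j)) (hc : ∀ i, r < dist (a i) c)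
    (hw : ∀ i, w i ∈ closedBall (a i) r)
    (hww : ∀ i j, dist (w i) (w j) = dmin (closedBall (a i) r) (closedBall (a j) r)) :
    ∃ z ∈ closedBall c r, ∀ i, dist z (w i) = dmin (closedBall (a i) r) (closedBall c r) := by
  set m : κ → ℝ := fun i => dmin (closedBall (a i) r) (closedBall c r)
  have hm : ∀ i, 2 * r < m i := fun i => hr.two_mul_lt_dmin hfin hM.dist_mem hr0.le (hc i)
  have hm_le : ∀ i, m i ≤ dist (w i) c := fun i => dmin_le_dist (hw i) (mem_closedBall_self hr0.le)
  have hle_m : ∀ i, dist (w i) c ≤ m i + r := fun i =>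
    dist_le_dmin_closedBall_add hfin hM hr hr0 (hc i) (hw i) (mem_closedBall_self hr0.le)
  have hm_tri : ∀ i j, m i ≤ dist (w i) (w j) + m j := fun i j =>
    hww i j ▸ dmin_closedBall_le_add hfin hM hr hr0 (hc j)
  have hww_le : ∀ i j, dist (w i) (w j) ≤ m i + m j := fun i j => by
    rw [hww, show m j = dmin (closedBall c r) (closedBall (a j) r) from dmin_comm _ _]
    exact dmin_closedBall_le_add hfin hM hr hr0 (by rw [dist_comm]; exact hc j)
  have hp : Function.Injective fun o : Option κ => o.elim c w := by
    have hwc : ∀ i, w i ≠ c := fun i h => by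
      have := hm_le i
      rw [h, dist_self] at this
      linarith [hm i]
    rintro (_ | i) (_ | j) h <;> simp only [Option.elim] at h
    · rfl
    · exact absurd h.symm (hwc j)
    · exact absurd h (hwc i)
    · by_contra hij
      have hww_ij := hww i j
      rw [h, dist_self] at hww_ij
      linarith [hr.two_mul_lt_dmin hfin hM.dist_mem hr0.le (ha i j fun h => hij (h ▸ rfl))]
  have hlip : ∀ o o' : Option κ,
      |o.elim r m - o'.elim r m| ≤ dist (o.elim c w) (o'.elim c w) := by
    rintro (_ | i) (_ | j) <;> simp only [Option.elim, dist_comm c, abs_le, sub_self, dist_self]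
    · norm_num
    · constructor <;> linarith [hm j, hm_le j]
    · constructor <;> linarith [hm i, hm_le i]
    · constructor <;> linarith [hm_tri i j, hm_tri j i, dist_comm (w i) (w j)]
  have htri : ∀ o o' : Option κ, dist (o.elim c w) (o'.elim c w) ≤ o.elim r m + o'.elim r m := by
    rintro (_ | i) (_ | j) <;> simp only [Option.elim, dist_comm c, dist_self]
    · linarith
    · linarith [hle_m j]
    · linarith [hle_m i]
    · exact hww_le i j
  obtain ⟨z, hz⟩ := hM.exists_dist_eq (dist_self c ▸ hM.dist_mem c c)
    (fun o : Option κ => o.elim c w) (fun o => o.elim r m) hp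
    (Option.forall.2 ⟨hr.1, fun i => dmin_mem hfin hM.dist_mem
      (nonempty_closedBall.2 hr0.le) (nonempty_closedBall.2 hr0.le)⟩)
    (Option.forall.2 ⟨hr0, fun i => show 0 < m i by linarith [hm i]⟩) hlip htri
  exact ⟨z, (hz none).le, fun i => hz (some i)⟩

theorem exists_transversal_dist_eq_dmin (hfin : D.Finite) (hM : IsUrysohn D M)
    (hr : IsJump D r) (hr0 : 0 < r) :
    ∀ {n : ℕ} (a : Fin n → M), (∀ i j, i ≠ j → r < dist (a i) (a j)) →
      ∃ w : Fin n → M, (∀ i, w i ∈ closedBall (a i) r) ∧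
        ∀ i j, dist (w i) (w j) = dmin (closedBall (a i) r) (closedBall (a j) r)
  | 0, a, _ => ⟨a, finZeroElim, finZeroElim⟩
  | n + 1, a, ha => by
    obtain ⟨w, hw, hww⟩ := exists_transversal_dist_eq_dmin hfin hM hr hr0 (Fin.init a)
      fun i j hij => ha _ _ (Fin.castSucc_injective _ |>.ne hij)
    obtain ⟨z, hz, hzw⟩ := exists_mem_closedBall_dist_eq_dmin_of_transversal hfin hM hr hr0
      (c := a (Fin.last n)) (fun i j hij => ha _ _ (Fin.castSucc_injective _ |>.ne hij))
      (fun i => ha _ _ (Fin.castSucc_ne_last i)) hw hww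
    refine ⟨Fin.snoc w z, fun i => ?_, fun i j => ?_⟩
    · induction i using Fin.lastCases with
      | last => simpa using hz
      | cast i => simpa [Fin.init] using hw i
    · induction i using Fin.lastCases <;> induction j using Fin.lastCases <;>
        simp only [Fin.snoc_last, Fin.snoc_castSucc, dist_self]
      · exact (dmin_self (nonempty_closedBall.2 hr0.le)).symm
      · rw [hzw, dmin_comm]
      · rw [dist_comm, hzw]
      · exact hww _ _

end Classes

theorem statement11 (D : Set ℝ) (hD : IsUniversalDist D) (M : Type) [MetricSpace M]
    (hM : IsUrysohn D M) (r : ℝ) (hr : IsJump D r) (n : ℕ) (a : Fin n → M)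
    (hdistinct : ∀ i j, i ≠ j → r < dist (a i) (a j)) :
    ∃ w : Fin n → M, (∀ i, dist (w i) (a i) ≤ r) ∧
      ∀ i j, dist (w i) (w j) =
        dmin {x : M | dist x (a i) ≤ r} {x : M | dist x (a j) ≤ r} := by
  obtain ⟨hfin, -, hnonneg, -⟩ := hD
  rcases (hnonneg r hr.1).eq_or_lt with rfl | hr0
  · refine ⟨a, fun i => (dist_self _).le, fun i j => ?_⟩
    simp [dmin_singleton]
  · exact exists_transversal_dist_eq_dmin hfin hM hr hr0 a hdistinct

end Sauer
end
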